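/- arXiv:2605.09035 — 3 statements merged into one kernel-verified Lean document; each statement's English description precedes it below -/
import Mathlib

section
/- If P and Q are real n×n matrices satisfying AP + PB + X = 0 and AᵀQ + QBᵀ + Y = 0, where A, B, X, Y are real n×n matrices, then tr(YᵀP) = tr(XᵀQ). -/
open Matrix

theorem sylvester_trace_identity {n : ℕ} (A B X Y P Q : Matrix (Fin n) (Fin n) ℝ)
    (hP : A * P + P * B + X = 0) (hQ : Aᵀ * Q + Q * Bᵀ + Y = 0) :
    (Yᵀ * P).trace = (Xᵀ * Q).trace := by
  have hX : X = -(A * P + P * B) := eq_neg_of_add_eq_zero_right hP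
  have hY : Y = -(Aᵀ * Q + Q * Bᵀ) := eq_neg_of_add_eq_zero_right hQ
  subst hX hY
  simp only [transpose_neg, transpose_add, transpose_mul, transpose_transpose,
    neg_mul, add_mul, trace_neg, trace_add, mul_assoc]
  have h1 : (Qᵀ * (A * P)).trace = (Pᵀ * (Aᵀ * Q)).trace := by
    rw [show Qᵀ * (A * P) = (Pᵀ * (Aᵀ * Q))ᵀ by simp [transpose_mul, mul_assoc],
      trace_transpose]
  have h2 : (B * (Qᵀ * P)).trace = (Bᵀ * (Pᵀ * Q)).trace := by
    rw [trace_mul_comm, show Qᵀ * P * B = (Bᵀ * (Pᵀ * Q))ᵀ by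
      simp [transpose_mul, mul_assoc], trace_transpose]
  rw [h1, h2]
end

section
/- Let X be symmetric positive definite, η symmetric, and set E = X^{1/2} exp((1/2) X^{−1/2} η X^{−1/2}) X^{−1/2} and Y = X^{1/2} exp(X^{−1/2} η X^{−1/2}) X^{1/2}. Then for all symmetric ξ, ζ, one has tr(Y⁻¹ (EξEᵀ) Y⁻¹ (EζEᵀ)) = tr(X⁻¹ ξ X⁻¹ ζ); i.e., parallel transport ξ ↦ EξEᵀ is an isometry from the tangent space at X to the tangent space at Y under the affine-invariant metric. -/
open Matrix

section

open scoped ComplexOrder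

/-- The square root of a positive semidefinite matrix, as `Matrix.PosSemidef.sqrt` was defined
in Mathlib (December 2024); it has since been removed in favour of `CFC.sqrt`. -/
noncomputable def Matrix.PosSemidef.sqrt {m : Type*} [Fintype m] [DecidableEq m] {𝕜 : Type*}
    [RCLike 𝕜] {A : Matrix m m 𝕜} (hA : A.PosSemidef) : Matrix m m 𝕜 :=
  hA.1.eigenvectorUnitary.1 * diagonal ((↑) ∘ (√·) ∘ hA.1.eigenvalues) *
    (star hA.1.eigenvectorUnitary : Matrix m m 𝕜)

end

/-! With `S = X^{1/2}` and `P = exp (½ • S⁻¹ η S⁻¹)`, both symmetric, we have `E = S P S⁻¹`,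
`Y = S P² S` and `X = S²`. Hence `Y⁻¹ (E ξ Eᵀ) = C⁻¹ (X⁻¹ ξ) C` with `C = S⁻¹ P S`, so the left-hand
trace is the trace of a conjugate of `X⁻¹ ξ X⁻¹ ζ`. -/

open scoped ComplexOrder

namespace Matrix

theorem IsSymm.mul_mul_of_isSymm {m α : Type*} [Fintype m] [CommSemiring α] {A B : Matrix m m α}
    (hA : A.IsSymm) (hB : B.IsSymm) : (B * A * B).IsSymm := by
  rw [IsSymm, transpose_mul, transpose_mul, hA.eq, hB.eq, Matrix.mul_assoc]

variable {m : Type*} [Fintype m] [DecidableEq m]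

theorem PosSemidef.sqrt_mul_self {𝕜 : Type*} [RCLike 𝕜] {A : Matrix m m 𝕜} (hA : A.PosSemidef) :
    hA.sqrt * hA.sqrt = A := by
  conv_rhs => rw [hA.1.spectral_theorem, Unitary.conjStarAlgAut_apply]
  simp only [PosSemidef.sqrt, Matrix.mul_assoc]
  rw [← Matrix.mul_assoc (star hA.1.eigenvectorUnitary : Matrix m m 𝕜),
    Unitary.coe_star_mul_self, Matrix.one_mul]
  congr 1
  rw [← Matrix.mul_assoc, diagonal_mul_diagonal]
  congr 2
  funext i
  simp [← RCLike.ofReal_mul, Real.mul_self_sqrt (hA.eigenvalues_nonneg i)]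

theorem PosSemidef.isHermitian_sqrt {𝕜 : Type*} [RCLike 𝕜] {A : Matrix m m 𝕜}
    (hA : A.PosSemidef) : hA.sqrt.IsHermitian := by
  simp only [IsHermitian, PosSemidef.sqrt, conjTranspose_mul, star_eq_conjTranspose,
    conjTranspose_conjTranspose, diagonal_conjTranspose, Matrix.mul_assoc]
  congr 3
  funext i
  simp

theorem exp_half_smul_mul_self {𝕂 : Type*} [RCLike 𝕂] (A : Matrix m m 𝕂) :
    NormedSpace.exp ((1 / 2 : 𝕂) • A) * NormedSpace.exp ((1 / 2 : 𝕂) • A) = NormedSpace.exp A := by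
  rw [← exp_add_of_commute _ _ (Commute.refl _), ← add_smul]
  norm_num

section CommRing

variable {R : Type*} [CommRing R] {S P : Matrix m m R}

theorem inv_mul_transport_eq_conj (hS : IsUnit S.det) (hP : IsUnit P.det) (hSt : S.IsSymm)
    (hPt : P.IsSymm) (ξ : Matrix m m R) :
    (S * (P * P) * S)⁻¹ * (S * P * S⁻¹ * ξ * (S * P * S⁻¹)ᵀ)
      = (S⁻¹ * P * S)⁻¹ * ((S * S)⁻¹ * ξ) * (S⁻¹ * P * S) := by
  simp only [Matrix.mul_inv_rev, nonsing_inv_nonsing_inv _ hS, transpose_mul, hSt.eq, hPt.eq,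
    hSt.inv.eq, Matrix.mul_assoc, nonsing_inv_mul_cancel_left _ _ hS,
    nonsing_inv_mul_cancel_left _ _ hP, mul_nonsing_inv_cancel_left _ _ hS]

theorem trace_inv_mul_transport_mul_inv_mul_transport (hS : IsUnit S.det) (hP : IsUnit P.det)
    (hSt : S.IsSymm) (hPt : P.IsSymm) (ξ ζ : Matrix m m R) :
    letI E := S * P * S⁻¹
    letI Y := S * (P * P) * S
    (Y⁻¹ * (E * ξ * Eᵀ) * Y⁻¹ * (E * ζ * Eᵀ)).trace = ((S * S)⁻¹ * ξ * (S * S)⁻¹ * ζ).trace := by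
  rw [Matrix.mul_assoc _ (S * (P * P) * S)⁻¹, inv_mul_transport_eq_conj hS hP hSt hPt,
    inv_mul_transport_eq_conj hS hP hSt hPt]
  set C := S⁻¹ * P * S
  have hC : IsUnit C.det := by simp [C, hS, hP]
  calc _ = (C⁻¹ * ((S * S)⁻¹ * ξ * ((S * S)⁻¹ * ζ)) * C).trace := by
        simp only [Matrix.mul_assoc, mul_nonsing_inv_cancel_left _ _ hC]
    _ = _ := by rw [trace_conj' ((isUnit_iff_isUnit_det C).mpr hC), ← Matrix.mul_assoc]

end CommRing

end Matrix

theorem parallel_transport_isometry {n : ℕ} (X η : Matrix (Fin n) (Fin n) ℝ)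
    (hX : X.PosDef) (hη : ηᵀ = η) :
    ∀ ξ ζ : Matrix (Fin n) (Fin n) ℝ, ξᵀ = ξ → ζᵀ = ζ →
      letI S := hX.posSemidef.sqrt
      letI E := S * NormedSpace.exp (((1:ℝ)/2) • (S⁻¹ * η * S⁻¹)) * S⁻¹
      letI Y := S * NormedSpace.exp (S⁻¹ * η * S⁻¹) * S
      (Y⁻¹ * (E * ξ * Eᵀ) * Y⁻¹ * (E * ζ * Eᵀ)).trace
        = (X⁻¹ * ξ * X⁻¹ * ζ).trace := by
  intro ξ ζ _ _
  set S := hX.posSemidef.sqrt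
  have hSS : S * S = X := hX.posSemidef.sqrt_mul_self
  have hS : IsUnit S.det := by
    have hXdet := hX.det_pos.ne'
    rw [← hSS, det_mul] at hXdet
    exact isUnit_iff_ne_zero.mpr (left_ne_zero_of_mul hXdet)
  have hSt : S.IsSymm := isHermitian_iff_isSymm.mp hX.posSemidef.isHermitian_sqrt
  have hP : (NormedSpace.exp (((1:ℝ)/2) • (S⁻¹ * η * S⁻¹))).IsSymm :=
    ((IsSymm.mul_mul_of_isSymm hη hSt.inv).smul _).exp
  have htrace := trace_inv_mul_transport_mul_inv_mul_transport hS
    ((isUnit_iff_isUnit_det _).mp (isUnit_exp _)) hSt hP ξ ζ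
  rwa [exp_half_smul_mul_self, hSS] at htrace
end

section
/- If A is a stable real n×n matrix and W is any real n×n matrix, then the Lyapunov equation AᵀQ + QA + W = 0 has a unique solution Q; if moreover W is symmetric positive semidefinite then Q is symmetric positive semidefinite. -/
/-!
Write `e t = exp (t • A)`. Over `ℂ` every vector is a sum of generalized eigenvectors of `A`,
on each of which `e t` acts as `exp (t μ)` times a polynomial in `t`; since `Re μ < 0` this
gives `e k → 0`. If `Aᵀ Q + Q A = 0`, then `e tᵀ Q e t` has zero derivative, so it is constantly
`Q` and also tends to `0`: the map `Q ↦ Aᵀ Q + Q A` is injective, hence bijective. If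
`Aᵀ Q + Q A = -W` with `W ⪰ 0`, the derivative of `xᵀ e tᵀ Q e t x` is `-(e t x)ᵀ W (e t x) ≤ 0`,
so `xᵀ Q x` dominates the limit `0`; `Q` is symmetric by uniqueness, as `Qᵀ` solves the same
equation.
-/

open Matrix Filter NormedSpace Topology Nat

-- Any submultiplicative norm would do: it is only needed for the calculus of `exp` on matrices.
attribute [local instance] Matrix.linftyOpNormedAddCommGroup Matrix.linftyOpNormedRing
  Matrix.linftyOpNormedAlgebra

theorem Complex.tendsto_exp_nat_mul_mul_pow_atTop_nhds_zero {μ : ℂ} (hμ : μ.re < 0) (j : ℕ) :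
    Tendsto (fun k : ℕ => Complex.exp (k * μ) * (k : ℂ) ^ j) atTop (𝓝 0) := by
  rw [tendsto_zero_iff_norm_tendsto_zero]
  have h := (tendsto_rpow_mul_exp_neg_mul_atTop_nhds_zero j (-μ.re) (by linarith)).comp
    tendsto_natCast_atTop_atTop
  refine h.congr fun k => ?_
  simp [Complex.norm_exp, mul_comm]

section NormedAlgebra

variable {𝕂 𝔸 : Type*} [RCLike 𝕂] [NormedRing 𝔸] [NormedAlgebra 𝕂 𝔸] [CompleteSpace 𝔸]

theorem hasDerivAt_exp_smul_mul_mul_exp_smul (A B Q : 𝔸) (t : 𝕂) :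
    HasDerivAt (fun u : 𝕂 => exp (u • B) * Q * exp (u • A))
      (exp (t • B) * (B * Q + Q * A) * exp (t • A)) t := by
  have h := ((hasDerivAt_exp_smul_const B t).mul_const Q).mul (hasDerivAt_exp_smul_const' A t)
  convert h using 1
  · ext u; simp only [Pi.mul_apply]
  · noncomm_ring

theorem eq_zero_of_mul_add_mul_eq_zero {A B Q : 𝔸}
    (hA : Tendsto (fun k : ℕ => exp ((k : 𝕂) • A)) atTop (𝓝 0))
    (hB : Tendsto (fun k : ℕ => exp ((k : 𝕂) • B)) atTop (𝓝 0))
    (hQ : B * Q + Q * A = 0) : Q = 0 := by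
  have hconst : ∀ t : 𝕂, exp (t • B) * Q * exp (t • A) = Q := fun t => by
    have hderiv (s : 𝕂) := hasDerivAt_exp_smul_mul_mul_exp_smul (𝕂 := 𝕂) A B Q s
    simp only [hQ, mul_zero, zero_mul] at hderiv
    simpa using is_const_of_deriv_eq_zero (fun s => (hderiv s).differentiableAt)
      (fun s => (hderiv s).deriv) t 0
  have hlim : Tendsto (fun k : ℕ => exp ((k : 𝕂) • B) * Q * exp ((k : 𝕂) • A)) atTop (𝓝 0) := by
    simpa using (hB.mul_const Q).mul hA
  exact tendsto_nhds_unique (tendsto_const_nhds.congr fun k : ℕ => (hconst (k : 𝕂)).symm) hlim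

end NormedAlgebra

namespace Matrix

variable {ι : Type*} [Fintype ι] [DecidableEq ι]

theorem exp_smul_mulVec_eq_sum_of_pow_mulVec_eq_zero (B : Matrix ι ι ℂ) (μ : ℂ) {v : ι → ℂ}
    {k : ℕ} (hv : (B - μ • 1) ^ k *ᵥ v = 0) (t : ℂ) :
    exp (t • B) *ᵥ v = ∑ j ∈ Finset.range k,
      (Complex.exp (t * μ) * t ^ j) • ((j ! : ℂ)⁻¹ • ((B - μ • 1) ^ j *ᵥ v)) := by
  set N := B - μ • 1
  have hsplit : t • B = algebraMap ℂ _ (t * μ) + t • N := by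
    rw [Algebra.algebraMap_eq_smul_one, smul_sub, smul_smul]
    abel
  have hexp : exp (t • B) = Complex.exp (t * μ) • exp (t • N) := by
    rw [hsplit, Matrix.exp_add_of_commute _ _ (Algebra.commute_algebraMap_left _ _),
      Complex.exp_eq_exp_ℂ, Algebra.smul_def (exp (t * μ))]
    exact congrArg (· * exp (t • N)) (algebraMap_exp_comm (t * μ)).symm
  have hseries : HasSum (fun j => ((j ! : ℂ)⁻¹ • (t • N) ^ j) *ᵥ v) (exp (t • N) *ᵥ v) :=
    (exp_series_hasSum_exp' (t • N)).map (mulVec.addMonoidHomLeft v)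
      (continuous_id.matrix_mulVec continuous_const)
  have htail : ∀ j ∉ Finset.range k, ((j ! : ℂ)⁻¹ • (t • N) ^ j) *ᵥ v = 0 := fun j hj => by
    have hNj : N ^ j *ᵥ v = 0 := by
      rw [← Nat.sub_add_cancel (not_lt.1 (Finset.mem_range.not.1 hj)), pow_add, ← mulVec_mulVec,
        hv, mulVec_zero]
    simp only [smul_pow, smul_mulVec, hNj, smul_zero]
  rw [hexp, smul_mulVec, ← (hasSum_sum_of_ne_finset_zero htail).unique hseries, Finset.smul_sum]
  refine Finset.sum_congr rfl fun j _ => ?_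
  simp only [smul_pow, smul_mulVec, smul_smul]
  ring_nf

theorem mem_spectrum_of_pow_sub_smul_mulVec_eq_zero {R : Type*} [CommRing R] {B : Matrix ι ι R}
    {μ : R} {v : ι → R} {k : ℕ} (hv : (B - μ • 1) ^ k *ᵥ v = 0) (hv0 : v ≠ 0) :
    μ ∈ spectrum R B := by
  contrapose! hv0
  have hunit : IsUnit ((B - μ • 1) ^ k) := by
    rw [spectrum.notMem_iff, ← IsUnit.neg_iff, neg_sub, Algebra.algebraMap_eq_smul_one] at hv0
    exact hv0.pow k
  exact mulVec_injective_of_isUnit hunit (hv.trans (mulVec_zero _).symm)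

theorem tendsto_exp_nat_smul_mulVec_of_pow_sub_smul_mulVec_eq_zero (B : Matrix ι ι ℂ) {μ : ℂ}
    (hμ : μ.re < 0) {v : ι → ℂ} {k : ℕ} (hv : (B - μ • 1) ^ k *ᵥ v = 0) :
    Tendsto (fun l : ℕ => exp ((l : ℂ) • B) *ᵥ v) atTop (𝓝 0) := by
  simp_rw [exp_smul_mulVec_eq_sum_of_pow_mulVec_eq_zero B μ hv]
  simpa using tendsto_finsetSum (Finset.range k) fun j _ =>
    (Complex.tendsto_exp_nat_mul_mul_pow_atTop_nhds_zero hμ j).smul_const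
      ((j ! : ℂ)⁻¹ • ((B - μ • 1) ^ j *ᵥ v))

theorem tendsto_exp_nat_smul_mulVec_nhds_zero (B : Matrix ι ι ℂ)
    (hB : ∀ μ ∈ spectrum ℂ B, μ.re < 0) (v : ι → ℂ) :
    Tendsto (fun k : ℕ => exp ((k : ℂ) • B) *ᵥ v) atTop (𝓝 0) := by
  have hv : v ∈ ⨆ μ, Module.End.maxGenEigenspace (toLinAlgEquiv' B) μ := by
    rw [Module.End.iSup_maxGenEigenspace_eq_top]; trivial
  refine Submodule.iSup_induction _
    (motive := fun w => Tendsto (fun k : ℕ => exp ((k : ℂ) • B) *ᵥ w) atTop (𝓝 0)) hv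
    (fun μ w hw => ?_) (by simp)
    fun u w hu hw => by simpa [mulVec_add] using hu.add hw
  obtain ⟨k, hk⟩ := (Module.End.mem_maxGenEigenspace _ _ _).1 hw
  rw [← map_one toLinAlgEquiv', ← map_smul, ← map_sub, ← map_pow] at hk
  rcases eq_or_ne w 0 with rfl | hw0
  · simp
  · exact tendsto_exp_nat_smul_mulVec_of_pow_sub_smul_mulVec_eq_zero B
      (hB μ (mem_spectrum_of_pow_sub_smul_mulVec_eq_zero hk hw0)) hk

theorem tendsto_exp_nat_smul_nhds_zero (B : Matrix ι ι ℂ) (hB : ∀ μ ∈ spectrum ℂ B, μ.re < 0) :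
    Tendsto (fun k : ℕ => exp ((k : ℂ) • B)) atTop (𝓝 0) := by
  refine tendsto_pi_nhds.2 fun i => tendsto_pi_nhds.2 fun j => ?_
  simpa [mulVec_single_one] using
    tendsto_pi_nhds.1 (tendsto_exp_nat_smul_mulVec_nhds_zero B hB (Pi.single j 1)) i

theorem tendsto_exp_nat_smul_nhds_zero_of_map_algebraMap (A : Matrix ι ι ℝ)
    (hA : ∀ μ ∈ spectrum ℂ (A.map (algebraMap ℝ ℂ)), μ.re < 0) :
    Tendsto (fun k : ℕ => exp ((k : ℝ) • A)) atTop (𝓝 0) := by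
  have hre : ∀ k : ℕ, exp ((k : ℝ) • A)
      = (exp ((k : ℂ) • A.map (algebraMap ℝ ℂ))).map Complex.re := fun k => by
    have h : (exp ((k : ℝ) • A)).map (algebraMap ℝ ℂ) = exp (((k : ℝ) • A).map (algebraMap ℝ ℂ)) :=
      map_exp (algebraMap ℝ ℂ).mapMatrix (continuous_id.matrix_map (continuous_algebraMap ℝ ℂ)) _
    calc exp ((k : ℝ) • A) = ((exp ((k : ℝ) • A)).map (algebraMap ℝ ℂ)).map Complex.re := by
          ext; simp
      _ = _ := by rw [h]; congr 3; ext; simp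
  simpa [hre, Function.comp_def] using
    ((continuous_id.matrix_map Complex.continuous_re).tendsto 0).comp
    (tendsto_exp_nat_smul_nhds_zero _ hA)

theorem exp_smul_transpose (A : Matrix ι ι ℝ) (t : ℝ) : exp (t • Aᵀ) = (exp (t • A))ᵀ := by
  rw [← transpose_smul, exp_transpose]

theorem hasDerivAt_dotProduct_mulVec {g : ℝ → Matrix ι ι ℝ} {g' : Matrix ι ι ℝ} {t : ℝ}
    (hg : HasDerivAt g g' t) (x y : ι → ℝ) :
    HasDerivAt (fun s => x ⬝ᵥ g s *ᵥ y) (x ⬝ᵥ g' *ᵥ y) t :=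
  let q : Matrix ι ι ℝ →ₗ[ℝ] ℝ :=
    { toFun := fun M => x ⬝ᵥ M *ᵥ y
      map_add' := fun M N => by simp [add_mulVec, dotProduct_add]
      map_smul' := fun c M => by simp [smul_mulVec, dotProduct_smul] }
  q.toContinuousLinearMap.hasFDerivAt.comp_hasDerivAt t hg

def lyapunovMap (A : Matrix ι ι ℝ) : Matrix ι ι ℝ →ₗ[ℝ] Matrix ι ι ℝ :=
  LinearMap.mulLeft ℝ Aᵀ + LinearMap.mulRight ℝ A

theorem lyapunovMap_apply (A Q : Matrix ι ι ℝ) : lyapunovMap A Q = Aᵀ * Q + Q * A := rfl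

variable {A : Matrix ι ι ℝ}

theorem lyapunovMap_injective (hA : Tendsto (fun k : ℕ => exp ((k : ℝ) • A)) atTop (𝓝 0)) :
    Function.Injective (lyapunovMap A) := by
  have hAt : Tendsto (fun k : ℕ => exp ((k : ℝ) • Aᵀ)) atTop (𝓝 0) := by
    simpa [exp_smul_transpose, Function.comp_def] using
      (continuous_id.matrix_transpose.tendsto 0).comp hA
  rw [← LinearMap.ker_eq_bot, LinearMap.ker_eq_bot']
  exact fun Q hQ => eq_zero_of_mul_add_mul_eq_zero hA hAt hQ

theorem lyapunovMap_bijective (hA : Tendsto (fun k : ℕ => exp ((k : ℝ) • A)) atTop (𝓝 0)) :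
    Function.Bijective (lyapunovMap A) :=
  ⟨lyapunovMap_injective hA, LinearMap.injective_iff_surjective.1 (lyapunovMap_injective hA)⟩

theorem isSymm_of_lyapunovMap_eq_neg (hA : Tendsto (fun k : ℕ => exp ((k : ℝ) • A)) atTop (𝓝 0))
    {Q W : Matrix ι ι ℝ} (hW : W.IsSymm) (hQ : lyapunovMap A Q = -W) : Q.IsSymm := by
  refine lyapunovMap_injective hA ?_
  rw [hQ, ← hW.eq, ← transpose_neg, ← hQ, lyapunovMap_apply, lyapunovMap_apply, transpose_add,
    transpose_mul, transpose_mul, transpose_transpose, add_comm]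

theorem posSemidef_of_lyapunovMap_eq_neg
    (hA : Tendsto (fun k : ℕ => exp ((k : ℝ) • A)) atTop (𝓝 0))
    {Q W : Matrix ι ι ℝ} (hW : W.PosSemidef) (hQ : lyapunovMap A Q = -W) : Q.PosSemidef := by
  refine .of_dotProduct_mulVec_nonneg (isSymm_of_lyapunovMap_eq_neg hA hW.isHermitian hQ)
    fun x => ?_
  set f : ℝ → ℝ := fun t => x ⬝ᵥ (exp (t • Aᵀ) * Q * exp (t • A)) *ᵥ x
  have hderiv : ∀ t, HasDerivAt f (x ⬝ᵥ (exp (t • Aᵀ) * -W * exp (t • A)) *ᵥ x) t := fun t => by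
    have h := hasDerivAt_dotProduct_mulVec (hasDerivAt_exp_smul_mul_mul_exp_smul A Aᵀ Q t) x x
    rwa [← lyapunovMap_apply, hQ] at h
  have hderiv_nonpos : ∀ t, x ⬝ᵥ (exp (t • Aᵀ) * -W * exp (t • A)) *ᵥ x ≤ 0 := fun t => by
    rw [exp_smul_transpose, Matrix.mul_neg, Matrix.neg_mul, neg_mulVec, dotProduct_neg,
      ← mulVec_mulVec, ← mulVec_mulVec, dotProduct_mulVec, vecMul_transpose, neg_nonpos]
    exact hW.dotProduct_mulVec_nonneg _
  have hanti : Antitone f := antitone_of_deriv_nonpos (fun t => (hderiv t).differentiableAt)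
    fun t => (hderiv t).deriv ▸ hderiv_nonpos t
  have hlim : Tendsto (fun k : ℕ => f k) atTop (𝓝 0) := by
    have hq : Continuous fun M : Matrix ι ι ℝ => x ⬝ᵥ (Mᵀ * Q * M) *ᵥ x := by fun_prop
    simpa [f, exp_smul_transpose, Function.comp_def] using (hq.tendsto 0).comp hA
  simpa [f] using le_of_tendsto' hlim fun k => hanti (Nat.cast_nonneg k)

end Matrix

theorem lyapunov_unique_solution {n : ℕ} (A : Matrix (Fin n) (Fin n) ℝ)
    (hA : ∀ μ ∈ spectrum ℂ (A.map (algebraMap ℝ ℂ)), μ.re < 0)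
    (W : Matrix (Fin n) (Fin n) ℝ) :
    (∃! Q : Matrix (Fin n) (Fin n) ℝ, Aᵀ * Q + Q * A + W = 0) ∧
    (W.PosSemidef → ∀ Q : Matrix (Fin n) (Fin n) ℝ,
      Aᵀ * Q + Q * A + W = 0 → Q.PosSemidef) := by
  have hdecay := tendsto_exp_nat_smul_nhds_zero_of_map_algebraMap A hA
  simp only [add_eq_zero_iff_eq_neg, ← lyapunovMap_apply]
  exact ⟨(lyapunovMap_bijective hdecay).existsUnique (-W),
    fun hW Q hQ => posSemidef_of_lyapunovMap_eq_neg hdecay hW hQ⟩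
end
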